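/- Let w be an area sequence and let c_0, c_1, …, c_k be its admissible insertion positions taken in admissible order. Then for every 0 ≤ i ≤ k, the inserted letter of ins_{c_i}(w), located at position c_i + 1, equals the maximum value of ins_{c_i}(w), and it is the leftmost letter of the rightmost block of consecutive maximal letters of ins_{c_i}(w); that is, i_0(ins_{c_i}(w)) = c_i + 1. -/

import Mathlib

/-- The `i`-th letter of the word `w` (`1`-indexed, as in the paper);
defaults to `0` out of range. -/
def get1 (w : List ℕ) (i : ℕ) : ℕ := w.getD (i - 1) 0

/-- `w` is the area sequence of a Dyck path: the first letter is `0` and each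
letter exceeds the previous one by at most one. -/
def IsAreaSeq (w : List ℕ) : Prop :=
  (w ≠ [] → get1 w 1 = 0) ∧ ∀ i, 1 ≤ i → i < w.length → get1 w (i + 1) ≤ get1 w i + 1

/-- Insertion at position `i` (for `0 ≤ i ≤ n`): `ins w 0` prepends a `0`, and
for `1 ≤ i ≤ n`, `ins w i` inserts the letter `w_i + 1` just after position `i`. -/
def ins (w : List ℕ) (i : ℕ) : List ℕ :=
  w.take i ++ (if i = 0 then 0 else get1 w i + 1) :: w.drop i

/-- The area statistic: the sum of the letters. -/
def area (w : List ℕ) : ℕ := w.sum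

/-- The dinv statistic: `dinv w = Σ_i d_i` where `d_i` is the number of `j > i`
with `w_j = w_i` or `w_j = w_i - 1`. -/
def dinv (w : List ℕ) : ℕ :=
  ∑ i ∈ Finset.Icc 1 w.length,
    ((Finset.Ioc i w.length).filter
      (fun j => get1 w j = get1 w i ∨ get1 w j + 1 = get1 w i)).card

/-- The maximal value of a word (`0` for the empty word). -/
def maxVal (w : List ℕ) : ℕ := w.foldr max 0

/-- Positions of the letters of maximal value `m`. -/
def Maxb (w : List ℕ) : Finset ℕ :=
  (Finset.Icc 1 w.length).filter (fun i => get1 w i = maxVal w)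

/-- Positions `i` with `w_i = m - 1` such that all letters after position `i`
are `< m`. -/
def Maxa (w : List ℕ) : Finset ℕ :=
  (Finset.Icc 1 w.length).filter (fun i =>
    get1 w i + 1 = maxVal w ∧ ∀ j ∈ Finset.Ioc i w.length, get1 w j < maxVal w)

/-- The position of the leftmost letter equal to the maximal value `m` in the
rightmost block of consecutive letters equal to `m`. -/
def i0 (w : List ℕ) : ℕ :=
  ((Finset.Icc 1 w.length).filter (fun i =>
    get1 w i = maxVal w ∧ (i = 1 ∨ get1 w (i - 1) ≠ maxVal w))).sup id

/-- The admissible insertion positions of `w`, listed in admissible order: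
the elements of `Maxb w` in decreasing order, then the elements of `Maxa w`
in decreasing order, then `i0 w - 1`.  The empty word has the single
admissible insertion position `0`. -/
def admissible (w : List ℕ) : List ℕ :=
  if w = [] then [0]
  else ((Maxb w).sort (· ≤ ·)).reverse ++ ((Maxa w).sort (· ≤ ·)).reverse ++ [i0 w - 1]

/-- Auxiliary version of the map `ψ`, reading the reversed word. -/
def psiRev : List ℕ → List ℕ
  | [] => []
  | a :: u => ins (psiRev u) ((admissible (psiRev u)).getD a 0)

/-- The map `ψ`: `ψ(ε) = ε` and `ψ(u a) = ins_{c_a}(ψ(u))` where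
`c_0, c_1, …, c_k` are the admissible insertion positions of `ψ(u)` in
admissible order. -/
def psi (w : List ℕ) : List ℕ := psiRev w.reverse

/-- The bounce sequence: `b_1 = 0`, and `b_i = b_{i-1} + 1` if
`b_{i-1} + 1 ≤ w_i`, otherwise `b_i = 0`. -/
def bseq (w : List ℕ) : ℕ → ℕ
  | 0 => 0
  | 1 => 0
  | (i + 2) => if bseq w (i + 1) + 1 ≤ get1 w (i + 2) then bseq w (i + 1) + 1 else 0

/-- The bounces of `w`: positions `1 < i ≤ n` with `b_i = 0`. -/
def bounces (w : List ℕ) : Finset ℕ :=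
  (Finset.Icc 2 w.length).filter (fun i => bseq w i = 0)

/-- The bounce statistic: the sum of the reversed positions `n - i + 1` of the
bounces of `w`. -/
def bounce (w : List ℕ) : ℕ := ∑ i ∈ bounces w, (w.length - i + 1)

/-!
Each admissible position `c` inserts a letter `x` that is at least every letter of `w`: `x = m + 1`
for `c ∈ Maxb w`, and `x = m` otherwise, where for `c = i0 w - 1` this uses that an area sequence
rises by at most one per step. Since `x` exceeds its left neighbour by one, it starts a block of
maximal letters of `ins w c`, and the choice of `c` guarantees that no later block of letters `x`
starts in `w`.
-/

def newLetter (w : List ℕ) (c : ℕ) : ℕ := if c = 0 then 0 else get1 w c + 1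

lemma ins_eq (w : List ℕ) (c : ℕ) : ins w c = w.take c ++ newLetter w c :: w.drop c := rfl

section Letters

variable {w : List ℕ} {c : ℕ}

lemma length_ins (hc : c ≤ w.length) : (ins w c).length = w.length + 1 := by
  simp only [ins, List.length_append, List.length_take, List.length_cons, List.length_drop]
  omega

lemma get1_ins_of_le {j : ℕ} (hc : c ≤ w.length) (hj : 1 ≤ j) (hjc : j ≤ c) :
    get1 (ins w c) j = get1 w j := by
  rw [get1, get1, ins_eq, List.getD_append _ _ _ _ (by simp only [List.length_take]; omega),
    List.getD_eq_getElem?_getD, List.getD_eq_getElem?_getD, List.getElem?_take_of_lt (by omega)]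

lemma get1_ins_succ (hc : c ≤ w.length) : get1 (ins w c) (c + 1) = newLetter w c := by
  rw [get1, ins_eq, List.getD_append_right _ _ _ _ (by simp only [List.length_take]; omega)]
  simp [List.length_take, Nat.min_eq_left hc]

lemma get1_ins_of_lt {j : ℕ} (hc : c ≤ w.length) (hj : c + 1 < j) :
    get1 (ins w c) j = get1 w (j - 1) := by
  rw [get1, get1, ins_eq, List.getD_append_right _ _ _ _ (by simp only [List.length_take]; omega),
    List.length_take, Nat.min_eq_left hc, show j - 1 - c = (j - 2 - c) + 1 by omega,
    List.getD_cons_succ, List.getD_eq_getElem?_getD, List.getD_eq_getElem?_getD,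
    List.getElem?_drop]
  congr 2
  omega

end Letters

section MaxVal

variable {w : List ℕ}

lemma le_maxVal_of_mem {a : ℕ} (h : a ∈ w) : a ≤ maxVal w := List.le_max_of_le h le_rfl

lemma maxVal_mem (h : w ≠ []) : maxVal w ∈ w :=
  List.maximum_mem (List.foldr_max_of_ne_nil h).symm

lemma get1_le_maxVal (w : List ℕ) (i : ℕ) : get1 w i ≤ maxVal w := by
  rcases lt_or_ge (i - 1) w.length with h | h
  · rw [get1, List.getD_eq_getElem _ _ h]
    exact le_maxVal_of_mem (List.getElem_mem h)
  · rw [get1, List.getD_eq_default _ _ h]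
    exact Nat.zero_le _

lemma maxVal_ins (w : List ℕ) (c : ℕ) : maxVal (ins w c) = max (newLetter w c) (maxVal w) := by
  rw [maxVal, ins_eq, List.perm_middle.foldr_eq, List.take_append_drop]
  rfl

end MaxVal

def IsMaxBlockStart (w : List ℕ) (p : ℕ) : Prop :=
  1 ≤ p ∧ p ≤ w.length ∧ get1 w p = maxVal w ∧ (p = 1 ∨ get1 w (p - 1) ≠ maxVal w)

section I0

variable {w : List ℕ} {p : ℕ}

lemma mem_i0_set_iff :
    p ∈ (Finset.Icc 1 w.length).filter (fun i =>
      get1 w i = maxVal w ∧ (i = 1 ∨ get1 w (i - 1) ≠ maxVal w)) ↔ IsMaxBlockStart w p := by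
  simp only [Finset.mem_filter, Finset.mem_Icc, IsMaxBlockStart, and_assoc]

lemma le_i0 (h : IsMaxBlockStart w p) : p ≤ i0 w :=
  Finset.le_sup (f := id) (mem_i0_set_iff.2 h)

lemma isMaxBlockStart_i0 (h : IsMaxBlockStart w p) : IsMaxBlockStart w (i0 w) := by
  obtain ⟨q, hq, hsup⟩ := Finset.exists_mem_eq_sup _ ⟨p, mem_i0_set_iff.2 h⟩ id
  rw [i0, hsup]
  exact mem_i0_set_iff.1 hq

lemma i0_eq_of_isMaxBlockStart (h : IsMaxBlockStart w p)
    (hlast : ∀ q, p < q → ¬IsMaxBlockStart w q) : i0 w = p :=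
  le_antisymm (not_lt.1 fun hlt => hlast _ hlt (isMaxBlockStart_i0 h)) (le_i0 h)

lemma exists_isMaxBlockStart (hne : w ≠ []) : ∃ p, IsMaxBlockStart w p := by
  classical
  obtain ⟨k, hk, hget⟩ := List.getElem_of_mem (maxVal_mem hne)
  have hex : ∃ q, 1 ≤ q ∧ q ≤ w.length ∧ get1 w q = maxVal w :=
    ⟨k + 1, by omega, hk, by rw [get1, Nat.add_sub_cancel, List.getD_eq_getElem _ _ hk, hget]⟩
  -- the leftmost maximal letter starts a block
  obtain ⟨h1, hlen, hmax⟩ := Nat.find_spec hex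
  refine ⟨Nat.find hex, h1, hlen, hmax, or_iff_not_imp_left.2 fun hne1 heq => ?_⟩
  exact Nat.find_min hex (by omega) ⟨by omega, by omega, heq⟩

end I0

/-- Here `k` indexes `w`: its letter lands at position `k + 1 ≥ c + 3` of `ins w c`. -/
def IsNewMaxPos (w : List ℕ) (c : ℕ) : Prop :=
  c ≤ w.length ∧ maxVal w ≤ newLetter w c ∧
    ∀ k, c + 1 < k → k ≤ w.length → get1 w k = newLetter w c → get1 w (k - 1) = newLetter w c

namespace IsNewMaxPos

variable {w : List ℕ} {c : ℕ}

lemma maxVal_ins (h : IsNewMaxPos w c) : maxVal (ins w c) = newLetter w c := by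
  rw [_root_.maxVal_ins, max_eq_left h.2.1]

lemma get1_ins_succ (h : IsNewMaxPos w c) : get1 (ins w c) (c + 1) = maxVal (ins w c) := by
  rw [_root_.get1_ins_succ h.1, h.maxVal_ins]

lemma i0_ins (h : IsNewMaxPos w c) : i0 (ins w c) = c + 1 := by
  have hc := h.1
  have hlen := length_ins hc
  refine i0_eq_of_isMaxBlockStart ⟨by omega, by omega, h.get1_ins_succ, ?_⟩ ?_
  · rcases Nat.eq_zero_or_pos c with rfl | hc0
    · exact Or.inl rfl
    · -- the inserted letter exceeds its left neighbour by one
      refine Or.inr ?_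
      rw [Nat.add_sub_cancel, get1_ins_of_le hc hc0 le_rfl, h.maxVal_ins, newLetter,
        if_neg hc0.ne']
      omega
  · rintro q hq ⟨-, hq2, hq3, hq4⟩
    rw [h.maxVal_ins, get1_ins_of_lt hc hq] at hq3
    rw [h.maxVal_ins] at hq4
    rcases hq4 with hq1 | hprev
    · omega
    rcases eq_or_lt_of_le (Nat.succ_le_of_lt hq) with rfl | hq'
    · exact hprev (_root_.get1_ins_succ hc)
    · rw [get1_ins_of_lt hc (by omega)] at hprev
      exact hprev (h.2.2 (q - 1) (by omega) (by omega) hq3)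

end IsNewMaxPos

section Admissible

variable {w : List ℕ} {c : ℕ}

lemma isNewMaxPos_nil : IsNewMaxPos [] 0 :=
  ⟨le_rfl, le_rfl, fun k hk hk' => by rw [List.length_nil] at hk'; omega⟩

lemma isNewMaxPos_of_mem_Maxb (hc : c ∈ Maxb w) : IsNewMaxPos w c := by
  obtain ⟨hc', hcm⟩ := Finset.mem_filter.1 hc
  obtain ⟨hc1, hc2⟩ := Finset.mem_Icc.1 hc'
  have hnew : newLetter w c = maxVal w + 1 := by rw [newLetter, if_neg (by omega), hcm]
  refine ⟨hc2, by omega, fun k _ _ hk => ?_⟩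
  have := get1_le_maxVal w k
  omega

lemma isNewMaxPos_of_mem_Maxa (hc : c ∈ Maxa w) : IsNewMaxPos w c := by
  obtain ⟨hc', hcm, hafter⟩ := Finset.mem_filter.1 hc
  obtain ⟨hc1, hc2⟩ := Finset.mem_Icc.1 hc'
  have hnew : newLetter w c = maxVal w := by rw [newLetter, if_neg (by omega), hcm]
  refine ⟨hc2, hnew.ge, fun k hk hk' hkm => ?_⟩
  have := hafter k (Finset.mem_Ioc.2 ⟨by omega, hk'⟩)
  omega

/-- Since `w` starts with `0` and rises by at most one per step, the letter before a block of
maximal letters is `maxVal w - 1`, unless the block starts the word, in which case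
`maxVal w = 0`. -/
lemma newLetter_i0_sub_one (hw : IsAreaSeq w) (hne : w ≠ []) :
    newLetter w (i0 w - 1) = maxVal w := by
  obtain ⟨p, hp⟩ := exists_isMaxBlockStart hne
  obtain ⟨h1, hlen, hmax, hstart⟩ := isMaxBlockStart_i0 hp
  rcases eq_or_lt_of_le h1 with h | h
  · rw [← h] at hmax ⊢
    rw [newLetter, if_pos rfl, ← hmax, hw.1 hne]
  · have hprev := hstart.resolve_left h.ne'
    have hrise := hw.2 (i0 w - 1) (by omega) (by omega)
    rw [Nat.sub_add_cancel h1, hmax] at hrise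
    have := get1_le_maxVal w (i0 w - 1)
    rw [newLetter, if_neg (by omega)]
    omega

lemma isNewMaxPos_i0_sub_one (hw : IsAreaSeq w) (hne : w ≠ []) : IsNewMaxPos w (i0 w - 1) := by
  obtain ⟨p, hp⟩ := exists_isMaxBlockStart hne
  have hlen := (isMaxBlockStart_i0 hp).2.1
  have hnew := newLetter_i0_sub_one hw hne
  refine ⟨by omega, hnew.ge, fun k hk hk' hkm => ?_⟩
  rw [hnew] at hkm ⊢
  by_contra hprev
  have := le_i0 (w := w) ⟨by omega, hk', hkm, Or.inr hprev⟩
  omega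

lemma isNewMaxPos_of_mem_admissible (hw : IsAreaSeq w) (hc : c ∈ admissible w) :
    IsNewMaxPos w c := by
  unfold admissible at hc
  split_ifs at hc with hne
  · rw [List.mem_singleton.1 hc, hne]
    exact isNewMaxPos_nil
  · simp only [List.mem_append, List.mem_reverse, Finset.mem_sort, List.mem_singleton] at hc
    rcases hc with (hb | ha) | rfl
    · exact isNewMaxPos_of_mem_Maxb hb
    · exact isNewMaxPos_of_mem_Maxa ha
    · exact isNewMaxPos_i0_sub_one hw hne

end Admissible

/-- If `c_0, …, c_k` are the admissible insertion positions of an area sequence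
`w` taken in admissible order, then the letter inserted at position `c_i + 1`
is of maximal value in `ins w c_i` and is the leftmost letter of the rightmost
block of consecutive maximal letters, i.e. `i0 (ins w c_i) = c_i + 1`. -/
theorem ins_admissible_is_new_max (w : List ℕ) (hw : IsAreaSeq w)
    (i : ℕ) (hi : i < (admissible w).length) :
    get1 (ins w ((admissible w).getD i 0)) ((admissible w).getD i 0 + 1) =
        maxVal (ins w ((admissible w).getD i 0)) ∧
      i0 (ins w ((admissible w).getD i 0)) = (admissible w).getD i 0 + 1 := by
  have hmem : (admissible w).getD i 0 ∈ admissible w := by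
    rw [List.getD_eq_getElem _ _ hi]
    exact List.getElem_mem hi
  have h := isNewMaxPos_of_mem_admissible hw hmem
  exact ⟨h.get1_ins_succ, h.i0_ins⟩
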